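/- Let G be a finite group and α an automorphism of G such that some cycle of α has length at least |G|/3. Then α has a regular cycle, i.e., some element of G has cycle length under α equal to the order of α. -/

import Mathlib

/-!
Induction on `|G|`. Let `d` be the largest cycle length of `α`, attained at `g₀`, so `|G| ≤ 3d`.
If `α ^ d = 1`, the cycle of `g₀` is regular. Otherwise the subgroup `F` of points fixed by `α ^ d`
is proper and contains `1` together with the `d` points of the cycle of `g₀`, so it has index `2`.
Then `α ^ d` acts on `G \ F` as right multiplication by one element `f ≠ 1` of `F`; `f` is fixed
by `α`, centralized by `F` and inverted by `G \ F`, so `⟨f⟩` is normal and `α`-stable, and the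
order of `α` divides `d * orderOf f`. The automorphism induced on `G ⧸ ⟨f⟩` again has a cycle of
length at least a third of the group, so by induction it has a regular point `z⟨f⟩`. Counting
inside the image of `F` forces `z ∉ F`, and the cycle of such a `z` has length `d * orderOf f`.
-/

open Function Subgroup

theorem Function.minimalPeriod_le_ncard {α : Type*} {f : α → α} {s : Set α} {x : α}
    (hs : s.Finite) (h : Set.MapsTo f s s) (hx : x ∈ s) : minimalPeriod f x ≤ s.ncard := by
  calc minimalPeriod f x = (Set.Iio (minimalPeriod f x)).ncard := (Set.ncard_Iio_nat _).symm
    _ ≤ s.ncard := Set.ncard_le_ncard_of_injOn (f^[·] x) (fun n _ => h.iterate n hx)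
        iterate_injOn_Iio_minimalPeriod hs

theorem card_eq_card_quotient_zpowers_mul_orderOf {G : Type*} [Group G] (f : G) :
    Nat.card G = Nat.card (G ⧸ zpowers f) * orderOf f := by
  rw [← Nat.card_zpowers, ← card_eq_card_quotient_mul_card_subgroup]

theorem one_lt_orderOf_of_ne_one {G : Type*} [Group G] [Finite G] {f : G} (hf : f ≠ 1) :
    1 < orderOf f :=
  lt_of_le_of_ne (orderOf_pos f) (Ne.symm (orderOf_eq_one_iff.not.2 hf))

namespace MulAut

variable {G : Type*} [Group G]

theorem pow_apply_eq_self_iff (α : MulAut G) (k : ℕ) (x : G) :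
    (α ^ k) x = x ↔ minimalPeriod α x ∣ k :=
  MulAction.pow_smul_eq_iff_minimalPeriod_dvd (a := α) (b := x)

theorem pow_eq_one_iff_forall_minimalPeriod_dvd (α : MulAut G) (k : ℕ) :
    α ^ k = 1 ↔ ∀ x, minimalPeriod α x ∣ k := by
  simp only [MulEquiv.ext_iff, one_apply, pow_apply_eq_self_iff]

theorem minimalPeriod_dvd_orderOf (α : MulAut G) (x : G) : minimalPeriod α x ∣ orderOf α :=
  (pow_eq_one_iff_forall_minimalPeriod_dvd α _).1 (pow_orderOf_eq_one α) x

def fixedSubgroup (σ : MulAut G) : Subgroup G where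
  carrier := {x | σ x = x}
  mul_mem' ha hb := by simp_all
  one_mem' := map_one σ
  inv_mem' ha := by simp_all

@[simp]
theorem mem_fixedSubgroup {σ : MulAut G} {x : G} : x ∈ σ.fixedSubgroup ↔ σ x = x := Iff.rfl

theorem fixedSubgroup_eq_top_iff {σ : MulAut G} : σ.fixedSubgroup = ⊤ ↔ σ = 1 := by
  simp [eq_top_iff', MulEquiv.ext_iff]

theorem exists_notMem_fixedSubgroup {σ : MulAut G} (hσ : σ ≠ 1) :
    ∃ x, x ∉ σ.fixedSubgroup := by
  simpa [← fixedSubgroup_eq_top_iff, eq_top_iff'] using hσ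

theorem ne_one_of_index_fixedSubgroup_eq_two {σ : MulAut G}
    (h2 : σ.fixedSubgroup.index = 2) : σ ≠ 1 := fun h => by
  simp [fixedSubgroup_eq_top_iff.2 h] at h2

theorem apply_mem_fixedSubgroup_iff {σ τ : MulAut G} (h : Commute τ σ) {x : G} :
    τ x ∈ σ.fixedSubgroup ↔ x ∈ σ.fixedSubgroup := by
  rw [mem_fixedSubgroup, mem_fixedSubgroup, ← mul_apply, ← h.eq, mul_apply, τ.injective.eq_iff]

theorem minimalPeriod_pos [Finite G] (α : MulAut G) (x : G) : 0 < minimalPeriod α x :=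
  minimalPeriod_pos_of_mem_periodicPts (α.injective.mem_periodicPts x)

theorem pow_apply_eq_self_of_apply_eq_self {α : MulAut G} {x : G} (hx : α x = x) (k : ℕ) :
    (α ^ k) x = x := by
  rw [pow_apply_eq_self_iff, minimalPeriod_eq_one_iff_isFixedPt.2 hx]
  exact one_dvd k

theorem pow_apply_eq_mul_zpow {τ : MulAut G} {x f : G} {m : ℤ} (hf : τ f = f)
    (hx : τ x = x * f ^ m) (k : ℕ) : (τ ^ k) x = x * f ^ (m * k) := by
  induction k with
  | zero => simp
  | succ k ih =>
    rw [pow_succ', mul_apply, ih, map_mul, map_zpow, hf, hx, mul_assoc, ← zpow_add]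
    push_cast
    ring_nf

section IndexTwo

variable {σ : MulAut G} {f : G}

theorem exists_apply_eq_mul_of_index_eq_two (h2 : σ.fixedSubgroup.index = 2) :
    ∃ f, ∀ x ∉ σ.fixedSubgroup, σ x = x * f := by
  obtain ⟨x₀, hx₀⟩ := exists_notMem_fixedSubgroup (ne_one_of_index_fixedSubgroup_eq_two h2)
  refine ⟨x₀⁻¹ * σ x₀, fun x hx => ?_⟩
  have hxx₀ : x * x₀⁻¹ ∈ σ.fixedSubgroup := by
    simp only [mul_mem_iff_of_index_two h2, inv_mem_iff, hx, hx₀]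
  calc σ x = σ (x * x₀⁻¹) * σ x₀ := by rw [← map_mul, inv_mul_cancel_right]
    _ = x * (x₀⁻¹ * σ x₀) := by rw [hxx₀, mul_assoc]

theorem apply_eq_self_of_commute (hσ : σ ≠ 1) (hf : ∀ x ∉ σ.fixedSubgroup, σ x = x * f)
    {τ : MulAut G} (hτ : Commute τ σ) : τ f = f := by
  obtain ⟨x₀, hx₀⟩ := exists_notMem_fixedSubgroup hσ
  have hτx₀ : τ x₀ ∉ σ.fixedSubgroup := (apply_mem_fixedSubgroup_iff hτ).not.2 hx₀
  refine mul_left_cancel (a := τ x₀) ?_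
  rw [← map_mul, ← hf x₀ hx₀, ← hf _ hτx₀, ← mul_apply, hτ.eq, mul_apply]

theorem commute_of_mem_fixedSubgroup (hσ : σ ≠ 1)
    (hf : ∀ x ∉ σ.fixedSubgroup, σ x = x * f) {h : G} (hh : h ∈ σ.fixedSubgroup) :
    Commute f h := by
  obtain ⟨x₀, hx₀⟩ := exists_notMem_fixedSubgroup hσ
  have hx₀h : x₀ * h ∉ σ.fixedSubgroup := (Subgroup.mul_mem_cancel_right _ hh).not.2 hx₀
  refine (mul_left_cancel (a := x₀) ?_).symm
  rw [← mul_assoc, ← hf _ hx₀h, map_mul, hf x₀ hx₀, mem_fixedSubgroup.1 hh, mul_assoc]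

theorem mul_mul_inv_eq_inv_of_notMem_fixedSubgroup (h2 : σ.fixedSubgroup.index = 2)
    (hf : ∀ x ∉ σ.fixedSubgroup, σ x = x * f) {g : G} (hg : g ∉ σ.fixedSubgroup) :
    g * f * g⁻¹ = f⁻¹ := by
  have hgg : g * g ∈ σ.fixedSubgroup := (mul_mem_iff_of_index_two h2).2 Iff.rfl
  have hfgf : f * (g * f) = g := by
    refine mul_left_cancel (a := g) ?_
    rw [← mul_assoc, ← hf g hg, ← map_mul]
    exact hgg
  calc g * f * g⁻¹ = g * f * (f * (g * f))⁻¹ := by rw [hfgf]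
    _ = f⁻¹ := by group

theorem normal_zpowers (h2 : σ.fixedSubgroup.index = 2)
    (hf : ∀ x ∉ σ.fixedSubgroup, σ x = x * f) : (zpowers f).Normal := by
  have hσ := ne_one_of_index_fixedSubgroup_eq_two h2
  refine ⟨fun n hn g => ?_⟩
  obtain ⟨k, rfl⟩ := mem_zpowers_iff.1 hn
  rw [← conj_zpow]
  by_cases hg : g ∈ σ.fixedSubgroup
  · rw [(commute_of_mem_fixedSubgroup hσ hf hg).symm.mul_inv_cancel]
    exact zpow_mem (mem_zpowers f) k
  · rw [mul_mul_inv_eq_inv_of_notMem_fixedSubgroup h2 hf hg]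
    exact zpow_mem (inv_mem (mem_zpowers f)) k

theorem ne_one_of_apply_eq_mul (hσ : σ ≠ 1) (hf : ∀ x ∉ σ.fixedSubgroup, σ x = x * f) :
    f ≠ 1 := by
  obtain ⟨x₀, hx₀⟩ := exists_notMem_fixedSubgroup hσ
  rintro rfl
  exact hx₀ (by simpa using hf x₀ hx₀)

theorem pow_apply_of_notMem_fixedSubgroup (hσ : σ ≠ 1)
    (hf : ∀ x ∉ σ.fixedSubgroup, σ x = x * f) {x : G} (hx : x ∉ σ.fixedSubgroup)
    (k : ℕ) :
    (σ ^ k) x = x * f ^ k := by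
  simpa using pow_apply_eq_mul_zpow (m := 1) (apply_eq_self_of_commute hσ hf (Commute.refl σ))
    (by simpa using hf x hx) k

end IndexTwo

section PowIndexTwo

variable {α : MulAut G} {d : ℕ} {f : G}

theorem orderOf_dvd_mul_orderOf (hσ : α ^ d ≠ 1)
    (hf : ∀ x ∉ (α ^ d).fixedSubgroup, (α ^ d) x = x * f) : orderOf α ∣ d * orderOf f := by
  refine orderOf_dvd_of_pow_eq_one (MulEquiv.ext fun x => ?_)
  rw [pow_mul, one_apply]
  by_cases hx : x ∈ (α ^ d).fixedSubgroup
  · exact pow_apply_eq_self_of_apply_eq_self hx _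
  · rw [pow_apply_of_notMem_fixedSubgroup hσ hf hx, pow_orderOf_eq_one, mul_one]

theorem mul_orderOf_dvd_of_pow_apply_eq_self (hσ : α ^ d ≠ 1)
    (hf : ∀ x ∉ (α ^ d).fixedSubgroup, (α ^ d) x = x * f) {x : G}
    (hx : x ∉ (α ^ d).fixedSubgroup) {k : ℕ} (hk : (α ^ k) x = x) (hdk : d ∣ k) :
    d * orderOf f ∣ k := by
  obtain ⟨m, rfl⟩ := hdk
  rw [pow_mul, pow_apply_of_notMem_fixedSubgroup hσ hf hx, mul_eq_left] at hk
  exact Nat.mul_dvd_mul_left d (orderOf_dvd_of_pow_eq_one hk)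

end PowIndexTwo

theorem index_fixedSubgroup_pow_minimalPeriod_eq_two [Finite G] {α : MulAut G} {g : G}
    (hg : g ≠ 1) (hσ : α ^ minimalPeriod α g ≠ 1)
    (hcard : Nat.card G ≤ 3 * minimalPeriod α g) :
    (α ^ minimalPeriod α g).fixedSubgroup.index = 2 := by
  set F := (α ^ minimalPeriod α g).fixedSubgroup
  have hmaps : Set.MapsTo α ((F : Set G) \ {1}) ((F : Set G) \ {1}) := fun x ⟨hxF, hx1⟩ =>
    ⟨(apply_mem_fixedSubgroup_iff (Commute.self_pow α _)).2 hxF, by simpa using hx1⟩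
  have hgF : g ∈ (F : Set G) \ {1} := ⟨(pow_apply_eq_self_iff α _ g).2 dvd_rfl, hg⟩
  have hper := minimalPeriod_le_ncard (Set.toFinite _) hmaps hgF
  rw [Set.ncard_sdiff_singleton_of_mem F.one_mem, ← Nat.card_coe_set_eq, SetLike.coe_sort_coe]
    at hper
  have h1 : F.index ≠ 1 := index_eq_one.not.2 (fixedSubgroup_eq_top_iff.not.2 hσ)
  have h0 : F.index ≠ 0 := index_ne_zero_of_finite
  have hF : F.index * Nat.card F = Nat.card G := F.index_mul_card
  have hpos : 0 < Nat.card F := Nat.card_pos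
  by_contra h2
  have h3 : 3 * Nat.card F ≤ F.index * Nat.card F := Nat.mul_le_mul_right _ (by omega)
  omega

section Quotient

variable {α : MulAut G} {d : ℕ} {f : G} [(zpowers f).Normal]

def quotientZPowers (α : MulAut G) (hαf : α f = f) : MulAut (G ⧸ zpowers f) :=
  QuotientGroup.congr _ _ α (by rw [MonoidHom.map_zpowers]; simp [hαf])

theorem quotientZPowers_pow_mk (hαf : α f = f) (k : ℕ) (x : G) :
    (quotientZPowers α hαf ^ k) (x : G ⧸ zpowers f) = ((α ^ k) x : G) := by
  induction k with
  | zero => rfl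
  | succ k ih => rw [pow_succ', mul_apply, ih, pow_succ', mul_apply]; rfl

theorem pow_mul_orderOf_apply_eq_self (hαf : α f = f) {s : ℕ} {x : G}
    (hx : (quotientZPowers α hαf ^ s) (x : G ⧸ zpowers f) = x) :
    (α ^ (s * orderOf f)) x = x := by
  rw [quotientZPowers_pow_mk, eq_comm, QuotientGroup.eq] at hx
  obtain ⟨m, hm⟩ := mem_zpowers_iff.1 hx
  have hsx : (α ^ s) x = x * f ^ m := by rw [hm, mul_inv_cancel_left]
  rw [pow_mul, pow_apply_eq_mul_zpow (pow_apply_eq_self_of_apply_eq_self hαf s) hsx, mul_comm,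
    zpow_mul, zpow_natCast, pow_orderOf_eq_one, one_zpow, mul_one]

variable [Finite G]

theorem card_quotientZPowers_le (hαf : α f = f) {g : G}
    (hg : Nat.card G ≤ 3 * minimalPeriod α g) :
    Nat.card (G ⧸ zpowers f) ≤
      3 * minimalPeriod (quotientZPowers α hαf) (g : G ⧸ zpowers f) := by
  set s := minimalPeriod (quotientZPowers α hαf) (g : G ⧸ zpowers f)
  have hsr : minimalPeriod α g ≤ s * orderOf f :=
    Nat.le_of_dvd (Nat.mul_pos (minimalPeriod_pos _ _) (orderOf_pos f))
      ((pow_apply_eq_self_iff α _ g).1 (pow_mul_orderOf_apply_eq_self hαf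
        ((pow_apply_eq_self_iff _ _ _).2 dvd_rfl)))
  refine Nat.le_of_mul_le_mul_right ?_ (orderOf_pos f)
  rw [← card_eq_card_quotient_zpowers_mul_orderOf, mul_assoc]
  exact hg.trans (Nat.mul_le_mul_left 3 hsr)

theorem dvd_orderOf_quotientZPowers (hσ : α ^ d ≠ 1)
    (hf : ∀ x ∉ (α ^ d).fixedSubgroup, (α ^ d) x = x * f) (hαf : α f = f)
    (hd : d ∣ orderOf α) : d ∣ orderOf (quotientZPowers α hαf) := by
  obtain ⟨x₀, hx₀⟩ := exists_notMem_fixedSubgroup hσ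
  have hα : orderOf α ∣ orderOf (quotientZPowers α hαf) * orderOf f := by
    refine orderOf_dvd_of_pow_eq_one (MulEquiv.ext fun x => ?_)
    refine pow_mul_orderOf_apply_eq_self hαf ?_
    rw [pow_orderOf_eq_one, one_apply]
  refine Nat.dvd_of_mul_dvd_mul_right (orderOf_pos f) (dvd_trans ?_ hα)
  exact mul_orderOf_dvd_of_pow_apply_eq_self hσ hf hx₀ (by rw [pow_orderOf_eq_one]; rfl) hd

theorem two_mul_minimalPeriod_le_card_quotientZPowers
    (h2 : (α ^ d).fixedSubgroup.index = 2) (hαf : α f = f) {z : G}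
    (hz : z ∈ (α ^ d).fixedSubgroup) :
    2 * minimalPeriod (quotientZPowers α hαf) (z : G ⧸ zpowers f) ≤
      Nat.card (G ⧸ zpowers f) := by
  have hfF : f ∈ (α ^ d).fixedSubgroup := pow_apply_eq_self_of_apply_eq_self hαf d
  have hindex : ((α ^ d).fixedSubgroup.map (QuotientGroup.mk' (zpowers f))).index = 2 := by
    rwa [index_map_eq _ (QuotientGroup.mk'_surjective _)
      (by rwa [QuotientGroup.ker_mk', zpowers_le])]
  set F' := (α ^ d).fixedSubgroup.map (QuotientGroup.mk' (zpowers f))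
  have hmaps : Set.MapsTo (quotientZPowers α hαf) F' F' := by
    rintro _ ⟨y, hy, rfl⟩
    exact ⟨α y, (apply_mem_fixedSubgroup_iff (Commute.self_pow α d)).2 hy, rfl⟩
  have hper := minimalPeriod_le_ncard (Set.toFinite _) hmaps ⟨z, hz, rfl⟩
  rw [← Nat.card_coe_set_eq, SetLike.coe_sort_coe] at hper
  rw [← F'.card_mul_index, hindex]
  exact (Nat.mul_comm 2 _).trans_le (Nat.mul_le_mul_right 2 hper)

theorem exists_minimalPeriod_eq_orderOf_of_quotientZPowers
    (h2 : (α ^ d).fixedSubgroup.index = 2) (hσ : α ^ d ≠ 1)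
    (hf : ∀ x ∉ (α ^ d).fixedSubgroup, (α ^ d) x = x * f) (hαf : α f = f)
    (hcard : Nat.card G ≤ 3 * d) (hd : d ∣ orderOf α)
    (hreg : ∃ y, minimalPeriod (quotientZPowers α hαf) y = orderOf (quotientZPowers α hαf)) :
    ∃ z, minimalPeriod α z = orderOf α := by
  obtain ⟨y, hy⟩ := hreg
  obtain ⟨z, rfl⟩ := QuotientGroup.mk_surjective y
  set β := quotientZPowers α hαf
  have hdq : d ∣ orderOf β := dvd_orderOf_quotientZPowers hσ hf hαf hd
  have hr : 1 < orderOf f := one_lt_orderOf_of_ne_one (ne_one_of_apply_eq_mul hσ hf)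
  -- otherwise `|G| ≥ 2 * d * orderOf f ≥ 4 * d`
  have hz : z ∉ (α ^ d).fixedSubgroup := by
    intro hz
    have hQ := two_mul_minimalPeriod_le_card_quotientZPowers h2 hαf hz
    have hq : 0 < minimalPeriod β z := minimalPeriod_pos β _
    have hdq' : d ≤ orderOf β := Nat.le_of_dvd (hy ▸ hq) hdq
    have hG := card_eq_card_quotient_zpowers_mul_orderOf f
    rw [hy] at hQ hq
    nlinarith
  have hqe : orderOf β ∣ minimalPeriod α z := by
    rw [← hy, ← pow_apply_eq_self_iff, quotientZPowers_pow_mk,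
      (pow_apply_eq_self_iff α _ z).2 dvd_rfl]
  refine ⟨z, (minimalPeriod_dvd_orderOf α z).antisymm ?_⟩
  exact (orderOf_dvd_mul_orderOf hσ hf).trans (mul_orderOf_dvd_of_pow_apply_eq_self hσ hf hz
    ((pow_apply_eq_self_iff α _ z).2 dvd_rfl) (hdq.trans hqe))

end Quotient

theorem exists_minimalPeriod_eq_orderOf_of_card_le [Finite G]
    (α : MulAut G) {g : G} (hg : Nat.card G ≤ 3 * minimalPeriod α g) :
    ∃ z, minimalPeriod α z = orderOf α := by
  induction hn : Nat.card G using Nat.strong_induction_on generalizing G with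
  | _ n ih =>
  subst hn
  obtain ⟨g₀, hg₀⟩ := Finite.exists_max (minimalPeriod α)
  set d := minimalPeriod α g₀
  have hcard : Nat.card G ≤ 3 * d := hg.trans (Nat.mul_le_mul_left 3 (hg₀ g))
  by_cases hσ : α ^ d = 1
  · exact ⟨g₀, (minimalPeriod_dvd_orderOf α g₀).antisymm (orderOf_dvd_of_pow_eq_one hσ)⟩
  have hg₀1 : g₀ ≠ 1 := by
    rintro rfl
    refine hσ ((pow_eq_one_iff_forall_minimalPeriod_dvd α d).2 fun x => ?_)
    have hd : d = 1 := minimalPeriod_eq_one_iff_isFixedPt.2 (map_one α)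
    have := minimalPeriod_pos α x
    have := hg₀ x
    rw [hd, Nat.dvd_one]
    omega
  have h2 := index_fixedSubgroup_pow_minimalPeriod_eq_two hg₀1 hσ hcard
  obtain ⟨f, hf⟩ := exists_apply_eq_mul_of_index_eq_two h2
  have hαf : α f = f := apply_eq_self_of_commute hσ hf (Commute.self_pow α d)
  have := normal_zpowers h2 hf
  refine exists_minimalPeriod_eq_orderOf_of_quotientZPowers h2 hσ hf hαf hcard
    (minimalPeriod_dvd_orderOf α g₀) (ih _ ?_ (quotientZPowers α hαf)
      (card_quotientZPowers_le hαf hcard) rfl)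
  rw [card_eq_card_quotient_zpowers_mul_orderOf f]
  exact lt_mul_of_one_lt_right Nat.card_pos
    (one_lt_orderOf_of_ne_one (ne_one_of_apply_eq_mul hσ hf))

end MulAut

theorem stmt14 {G : Type*} [Group G] [Fintype G] (α : MulAut G)
    (h : ∃ g : G, Fintype.card G ≤ 3 * Function.minimalPeriod (⇑α) g) :
    ∃ g : G, Function.minimalPeriod (⇑α) g = orderOf α := by
  obtain ⟨g, hg⟩ := h
  exact MulAut.exists_minimalPeriod_eq_orderOf_of_card_le α (by rwa [Nat.card_eq_fintype_card])
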